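/- If X and Y are topological spaces each having the generalized Bolzano–Weierstrass property, then their topological sum (disjoint union) X ⊕ Y also has the generalized Bolzano–Weierstrass property: every sequence of subsets of X ⊕ Y has a subsequence converging in the sense of Kuratowski. -/

import Mathlib

open Set Topology TopologicalSpace

/-- Lower closed limit (Kuratowski) of the subsequence of `K` indexed by the
infinite set `A ⊆ ℕ`, with respect to the topology `t`: points all of whose
open neighborhoods meet `K n` for all but finitely many `n ∈ A`. -/
def kurLi {X : Type*} (t : TopologicalSpace X) (K : ℕ → Set X) (A : Set ℕ) : Set X :=
  {x | ∀ U : Set X, IsOpen[t] U → x ∈ U → {n ∈ A | U ∩ K n = ∅}.Finite}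

/-- Upper closed limit (Kuratowski): points all of whose open neighborhoods
meet `K n` for infinitely many `n ∈ A`. -/
def kurLs {X : Type*} (t : TopologicalSpace X) (K : ℕ → Set X) (A : Set ℕ) : Set X :=
  {x | ∀ U : Set X, IsOpen[t] U → x ∈ U → {n ∈ A | (U ∩ K n).Nonempty}.Infinite}

/-- A family of subsets of `ℕ` is splitting if every infinite `A ⊆ ℕ` is split
by some member of the family. -/
def IsSplittingFamily (S : Set (Set ℕ)) : Prop :=
  ∀ A : Set ℕ, A.Infinite → ∃ s ∈ S, (A ∩ s).Infinite ∧ (A \ s).Infinite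

/-! A point of `X ⊕ Y` lies in one summand, and each summand is open,
so the Kuratowski limits of `K` restrict on `X` (resp. `Y`) to those of the traces `K n ∩ X`
(resp. `K n ∩ Y`). Convergence along `A` is inherited by every infinite `B ⊆ A`, so it suffices
to let the traces on `X` converge along some `A` and then, reindexing `A` by `ℕ`, to let the traces
on `Y` converge along some infinite `B ⊆ A`. -/

section Kuratowski

variable {X : Type*} (t : TopologicalSpace X) (K : ℕ → Set X)

lemma kurLi_anti {A B : Set ℕ} (h : A ⊆ B) : kurLi t K B ⊆ kurLi t K A :=
  fun _ hx U hU hxU => (hx U hU hxU).subset fun _ hn => ⟨h hn.1, hn.2⟩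

lemma kurLs_mono {A B : Set ℕ} (h : A ⊆ B) : kurLs t K A ⊆ kurLs t K B :=
  fun _ hx U hU hxU => (hx U hU hxU).mono fun _ hn => ⟨h hn.1, hn.2⟩

lemma kurLi_subset_kurLs {A : Set ℕ} (hA : A.Infinite) : kurLi t K A ⊆ kurLs t K A :=
  fun _ hx U hU hxU => (hA.sdiff (hx U hU hxU)).mono fun _ hn =>
    ⟨hn.1, nonempty_iff_ne_empty.2 fun h => hn.2 ⟨hn.1, h⟩⟩

lemma kurLi_eq_kurLs_of_subset {A B : Set ℕ} (hAB : A ⊆ B) (hA : A.Infinite)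
    (h : kurLi t K B = kurLs t K B) : kurLi t K A = kurLs t K A :=
  (kurLi_subset_kurLs t K hA).antisymm <| calc
    kurLs t K A ⊆ kurLs t K B := kurLs_mono t K hAB
    _ = kurLi t K B := h.symm
    _ ⊆ kurLi t K A := kurLi_anti t K hAB

lemma kurLi_image {e : ℕ → ℕ} (he : Function.Injective e) (B : Set ℕ) :
    kurLi t K (e '' B) = kurLi t (K ∘ e) B := by
  ext x
  refine forall₃_congr fun U _ _ => ?_
  change (e '' B ∩ {n | U ∩ K n = ∅}).Finite ↔ _
  rw [← image_inter_preimage, finite_image_iff he.injOn]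
  rfl

lemma kurLs_image {e : ℕ → ℕ} (he : Function.Injective e) (B : Set ℕ) :
    kurLs t K (e '' B) = kurLs t (K ∘ e) B := by
  ext x
  refine forall₃_congr fun U _ _ => ?_
  change (e '' B ∩ {n | (U ∩ K n).Nonempty}).Infinite ↔ _
  rw [← image_inter_preimage, infinite_image_iff he.injOn]
  rfl

lemma exists_subset_kurLi_eq_kurLs
    (hGBW : ∀ K : ℕ → Set X, ∃ A : Set ℕ, A.Infinite ∧ kurLi t K A = kurLs t K A)
    {A : Set ℕ} (hA : A.Infinite) :
    ∃ B ⊆ A, B.Infinite ∧ kurLi t K B = kurLs t K B := by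
  let e : ℕ → ℕ := fun n => hA.natEmbedding A n
  have he : Function.Injective e := Subtype.val_injective.comp (hA.natEmbedding A).injective
  obtain ⟨B, hB, hKB⟩ := hGBW (K ∘ e)
  refine ⟨e '' B, ?_, hB.image he.injOn, ?_⟩
  · rintro _ ⟨n, -, rfl⟩
    exact (hA.natEmbedding A n).2
  · rw [kurLi_image t K he, kurLs_image t K he, hKB]

end Kuratowski

section OpenMap

variable {X Z : Type*} [tX : TopologicalSpace X] [tZ : TopologicalSpace Z] {f : X → Z}

lemma mem_kurLi_iff_preimage (hf : Continuous f) (hfo : IsOpenMap f)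
    (K : ℕ → Set Z) (A : Set ℕ) (x : X) :
    f x ∈ kurLi tZ K A ↔ x ∈ kurLi tX (fun n => f ⁻¹' K n) A := by
  constructor
  · intro h V hV hxV
    refine (h _ (hfo V hV) (mem_image_of_mem f hxV)).subset fun n hn => ⟨hn.1, ?_⟩
    rw [← image_inter_preimage, show V ∩ f ⁻¹' K n = ∅ from hn.2, image_empty]
  · intro h U hU hxU
    refine (h _ (hU.preimage hf) hxU).subset fun n hn => ⟨hn.1, ?_⟩
    rw [← preimage_inter, hn.2, preimage_empty]

lemma mem_kurLs_iff_preimage (hf : Continuous f) (hfo : IsOpenMap f)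
    (K : ℕ → Set Z) (A : Set ℕ) (x : X) :
    f x ∈ kurLs tZ K A ↔ x ∈ kurLs tX (fun n => f ⁻¹' K n) A := by
  constructor
  · intro h V hV hxV
    refine (h _ (hfo V hV) (mem_image_of_mem f hxV)).mono fun n hn => ⟨hn.1, ?_⟩
    exact image_nonempty.1 ((image_inter_preimage f V (K n)).symm ▸ hn.2)
  · intro h U hU hxU
    refine (h _ (hU.preimage hf) hxU).mono fun n hn => ⟨hn.1, ?_⟩
    obtain ⟨y, hyU, hyK⟩ := hn.2
    exact ⟨f y, hyU, hyK⟩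

end OpenMap

/-- The topological sum of two spaces with the generalized
Bolzano–Weierstrass property again has the property. -/
theorem stmt17 {X Y : Type*} [tX : TopologicalSpace X] [tY : TopologicalSpace Y]
    (hX : ∀ K : ℕ → Set X, ∃ A : Set ℕ, A.Infinite ∧ kurLi tX K A = kurLs tX K A)
    (hY : ∀ K : ℕ → Set Y, ∃ A : Set ℕ, A.Infinite ∧ kurLi tY K A = kurLs tY K A)
    (K : ℕ → Set (X ⊕ Y)) :
    ∃ A : Set ℕ, A.Infinite ∧
      kurLi (inferInstance : TopologicalSpace (X ⊕ Y)) K A =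
        kurLs (inferInstance : TopologicalSpace (X ⊕ Y)) K A := by
  obtain ⟨A, hA, hXA⟩ := hX fun n => Sum.inl ⁻¹' K n
  obtain ⟨B, hBA, hB, hYB⟩ := exists_subset_kurLi_eq_kurLs tY (fun n => Sum.inr ⁻¹' K n) hY hA
  have hXB := kurLi_eq_kurLs_of_subset tX _ hBA hB hXA
  refine ⟨B, hB, ?_⟩
  ext (x | y)
  · rw [mem_kurLi_iff_preimage continuous_inl isOpenMap_inl,
      mem_kurLs_iff_preimage continuous_inl isOpenMap_inl, hXB]
  · rw [mem_kurLi_iff_preimage continuous_inr isOpenMap_inr,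
      mem_kurLs_iff_preimage continuous_inr isOpenMap_inr, hYB]
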